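/- Let G_{τ₁,m} and G_{τ₂,m} be isomorphic historical m-hop subgraphs via π with time offset Δ = t' − t. For an annotated temporal random walk W = ((z₀,t₀),(e₁,z₁,t₁),…,(e_m,z_m,t_m)) within G_{τ₁,m}, define π(W) = ((π(z₀),t₀+Δ),(π(e₁),π(z₁),t₁+Δ),…,(π(e_m),π(z_m),t_m+Δ)), where π(e) = {π(a) : a ∈ e}. Then W ↦ π(W) is a bijection from the set of length-m annotated temporal random walks within G_{τ₁,m} starting at (z₀,t₀) onto the set of length-m annotated temporal random walks within G_{τ₂,m} starting at (π(z₀),t₀+Δ), and it preserves sampling probabilities: P₂(π(W)) = P₁(W) for every such W, where P₁ and P₂ denote the annotated-walk sampling probabilities computed within G_{τ₁,m} and G_{τ₂,m} respectively. -/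

import Mathlib

/-!
The isomorphism is injective on the node set, so it acts injectively on the hyperedges of `H1`
and preserves their sizes. It therefore maps the candidate set at `(z, s)` bijectively onto the
candidate set at `(π z, s + Δ)`, and since a weight depends on times only through `s - t`, every
factor of the sampling probability is unchanged. Walks are transported step by step; the inverse
direction of the isomorphism pulls a walk of `H2` back one step at a time.
-/

open scoped Classical

namespace HIT

variable {V V' : Type*}

/-- The candidate set `C(z,s)` of temporal hyperedges containing `z` with timestamp before `s`. -/
noncomputable def cand (H : Finset (Finset V × ℝ)) (z : V) (s : ℝ) :
    Finset (Finset V × ℝ) :=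
  H.filter (fun et => z ∈ et.1 ∧ et.2 < s)

/-- The sampling weight `w(e,t;s) = (|e|−1)·exp(α·(s−t))` of a temporal hyperedge. -/
noncomputable def weight (α : ℝ) (s : ℝ) (et : Finset V × ℝ) : ℝ :=
  ((et.1.card : ℝ) - 1) * Real.exp (α * (s - et.2))

/-- An annotated temporal random walk, recorded as the list of steps `((e_l,t_l),z_l)`,
is valid from current node `z` and current time `s` if each hyperedge is a candidate at the
current state and the next node is drawn from the hyperedge minus the current node. -/
def ValidWalk (H : Finset (Finset V × ℝ)) : V → ℝ → List ((Finset V × ℝ) × V) → Prop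
  | _, _, [] => True
  | z, s, (et, z') :: rest =>
      et ∈ H ∧ z ∈ et.1 ∧ et.2 < s ∧ z' ∈ et.1 ∧ z' ≠ z ∧ ValidWalk H z' et.2 rest

/-- The sampling probability `P(W)` of an annotated temporal random walk. -/
noncomputable def walkProb (α : ℝ) (H : Finset (Finset V × ℝ)) :
    V → ℝ → List ((Finset V × ℝ) × V) → ℝ
  | _, _, [] => 1
  | z, s, (et, z') :: rest =>
      (weight α s et / ∑ et' ∈ cand H z s, weight α s et') *
        (1 / ((et.1.card : ℝ) - 1)) * walkProb α H z' et.2 rest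

/-- The node set of a temporal hypergraph: all nodes covered by its hyperedges. -/
noncomputable def nodes [DecidableEq V] (H : Finset (Finset V × ℝ)) : Finset V :=
  H.biUnion (fun et => et.1)

/-- `π` together with the time offset `Δ` is an isomorphism of temporal hypergraphs from
`H1` to `H2`: `π` is a bijection from the node set of `H1` onto the node set of `H2`, and
`(ẽ,t̃)` is a temporal hyperedge of `H1` iff `(π(ẽ), t̃+Δ)` is a temporal hyperedge of `H2`. -/
structure IsIso [DecidableEq V] [DecidableEq V'] (π : V → V') (Δ : ℝ)
    (H1 : Finset (Finset V × ℝ)) (H2 : Finset (Finset V' × ℝ)) : Prop where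
  injOn : Set.InjOn π (nodes H1 : Set V)
  image_nodes : (nodes H1).image π = nodes H2
  map_mem : ∀ e s, (e, s) ∈ H1 → (e.image π, s + Δ) ∈ H2
  mem_map : ∀ e' s', (e', s') ∈ H2 → ∃ e s, (e, s) ∈ H1 ∧ e' = e.image π ∧ s' = s + Δ

/-- The image `π(W)` of an annotated temporal random walk under a node map `π` with time
offset `Δ`: each step `((e,t),z)` is sent to `((π(e), t+Δ), π(z))`. -/
noncomputable def mapWalk [DecidableEq V'] (π : V → V') (Δ : ℝ)
    (W : List ((Finset V × ℝ) × V)) : List ((Finset V' × ℝ) × V') :=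
  W.map (fun st => ((st.1.1.image π, st.1.2 + Δ), π st.2))

theorem _root_.List.injOn_map {α β : Type*} {f : α → β} {s : Set α} (hf : Set.InjOn f s) :
    Set.InjOn (List.map f) {l | ∀ x ∈ l, x ∈ s}
  | [], _, [], _, _ => rfl
  | a :: l₁, h₁, b :: l₂, h₂, h => by
    obtain ⟨ha, hl₁⟩ := List.forall_mem_cons.1 h₁
    obtain ⟨hb, hl₂⟩ := List.forall_mem_cons.1 h₂
    obtain ⟨hab, hl⟩ := List.cons_eq_cons.1 h
    rw [hf ha hb hab, List.injOn_map hf hl₁ hl₂ hl]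

def mapEdge [DecidableEq V'] (π : V → V') (Δ : ℝ) (et : Finset V × ℝ) : Finset V' × ℝ :=
  (et.1.image π, et.2 + Δ)

section

variable [DecidableEq V'] {π : V → V'} {Δ : ℝ}

theorem mapWalk_cons (et : Finset V × ℝ) (z : V) (W : List ((Finset V × ℝ) × V)) :
    mapWalk π Δ ((et, z) :: W) = (mapEdge π Δ et, π z) :: mapWalk π Δ W :=
  rfl

@[simp]
theorem length_mapWalk (W : List ((Finset V × ℝ) × V)) : (mapWalk π Δ W).length = W.length :=
  List.length_map _

end

theorem mem_cand {H : Finset (Finset V × ℝ)} {z : V} {s : ℝ} {et : Finset V × ℝ} :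
    et ∈ cand H z s ↔ et ∈ H ∧ z ∈ et.1 ∧ et.2 < s := by
  simp [cand]

section

variable [DecidableEq V] {H : Finset (Finset V × ℝ)}

theorem subset_nodes {et : Finset V × ℝ} (h : et ∈ H) : et.1 ⊆ nodes H :=
  fun _ ha => Finset.mem_biUnion.2 ⟨et, h, ha⟩

theorem ValidWalk.forall_mem :
    ∀ {z : V} {s : ℝ} {W : List ((Finset V × ℝ) × V)}, ValidWalk H z s W →
      ∀ st ∈ W, st.1 ∈ H ∧ st.2 ∈ nodes H
  | _, _, [], _ => by simp
  | _, _, ((_, _) :: _), ⟨hH, _, _, hz', _, hrest⟩ =>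
    List.forall_mem_cons.2 ⟨⟨hH, subset_nodes hH hz'⟩, hrest.forall_mem⟩

end

namespace IsIso

variable [DecidableEq V] [DecidableEq V'] {π : V → V'} {Δ : ℝ}
  {H1 : Finset (Finset V × ℝ)} {H2 : Finset (Finset V' × ℝ)} (hiso : IsIso π Δ H1 H2)
include hiso

theorem card_image {et : Finset V × ℝ} (h : et ∈ H1) : (et.1.image π).card = et.1.card :=
  Finset.card_image_of_injOn (hiso.injOn.mono (Finset.coe_subset.2 (subset_nodes h)))

theorem mem_image_iff {e : Finset V} {z : V} (he : e ⊆ nodes H1) (hz : z ∈ nodes H1) :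
    π z ∈ e.image π ↔ z ∈ e := by
  simpa using hiso.injOn.mem_image_iff (Finset.coe_subset.2 he) hz

theorem injOn_mapEdge : Set.InjOn (mapEdge π Δ) H1 := by
  rintro ⟨e₁, t₁⟩ h₁ ⟨e₂, t₂⟩ h₂ h
  simp only [mapEdge, Prod.mk.injEq, add_left_inj] at h
  obtain ⟨he, rfl⟩ := h
  have he' : e₁ = e₂ := by
    rw [← Finset.coe_inj, ← hiso.injOn.image_eq_image_iff (Finset.coe_subset.2 (subset_nodes h₁))
      (Finset.coe_subset.2 (subset_nodes h₂)), ← Finset.coe_image, ← Finset.coe_image, he]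
  rw [he']

theorem weight_mapEdge (α s : ℝ) {et : Finset V × ℝ} (h : et ∈ H1) :
    weight α (s + Δ) (mapEdge π Δ et) = weight α s et := by
  simp only [weight, mapEdge, hiso.card_image h, add_sub_add_right_eq_sub]

theorem cand_eq_image {z : V} (hz : z ∈ nodes H1) (s : ℝ) :
    cand H2 (π z) (s + Δ) = (cand H1 z s).image (mapEdge π Δ) := by
  ext ⟨e', t'⟩
  simp only [Finset.mem_image, mem_cand, Prod.exists, mapEdge, Prod.mk.injEq]
  constructor
  · rintro ⟨hH', hz', ht'⟩
    obtain ⟨e, t, hH, rfl, rfl⟩ := hiso.mem_map e' t' hH'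
    exact ⟨e, t, ⟨hH, (hiso.mem_image_iff (subset_nodes hH) hz).1 hz', by linarith⟩, rfl, rfl⟩
  · rintro ⟨e, t, ⟨hH, hze, ht⟩, rfl, rfl⟩
    exact ⟨hiso.map_mem e t hH, Finset.mem_image_of_mem π hze, by linarith⟩

theorem sum_weight_cand (α : ℝ) {z : V} (hz : z ∈ nodes H1) (s : ℝ) :
    ∑ et ∈ cand H2 (π z) (s + Δ), weight α (s + Δ) et = ∑ et ∈ cand H1 z s, weight α s et := by
  have hcand : ∀ et ∈ cand H1 z s, et ∈ H1 := fun _ h => (mem_cand.1 h).1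
  rw [hiso.cand_eq_image hz, Finset.sum_image fun a ha b hb =>
    hiso.injOn_mapEdge (hcand a ha) (hcand b hb)]
  exact Finset.sum_congr rfl fun et h => hiso.weight_mapEdge α s (hcand et h)

theorem validWalk_mapWalk :
    ∀ {z : V} {s : ℝ} {W : List ((Finset V × ℝ) × V)}, z ∈ nodes H1 → ValidWalk H1 z s W →
      ValidWalk H2 (π z) (s + Δ) (mapWalk π Δ W)
  | _, _, [], _, _ => trivial
  | z, s, ((e, t), z') :: _, hz, ⟨hH, hze, hts, hz'e, hne, hrest⟩ => by
    have hz' : z' ∈ nodes H1 := subset_nodes hH hz'e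
    exact ⟨hiso.map_mem e t hH, Finset.mem_image_of_mem π hze, add_lt_add_left hts Δ,
      Finset.mem_image_of_mem π hz'e, fun h => hne (hiso.injOn hz' hz h),
      validWalk_mapWalk hz' hrest⟩

theorem exists_validWalk_mapWalk_eq :
    ∀ {z : V} {s : ℝ} {W' : List ((Finset V' × ℝ) × V')}, z ∈ nodes H1 →
      ValidWalk H2 (π z) (s + Δ) W' → ∃ W, ValidWalk H1 z s W ∧ mapWalk π Δ W = W'
  | _, _, [], _, _ => ⟨[], trivial, rfl⟩
  | z, s, ((e', t'), _) :: _, hz, ⟨hH', hze', hts', hy'e', hne', hrest'⟩ => by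
    obtain ⟨e, t, hH, rfl, rfl⟩ := hiso.mem_map e' t' hH'
    obtain ⟨y, hye, rfl⟩ := Finset.mem_image.1 hy'e'
    obtain ⟨W, hW, rfl⟩ := exists_validWalk_mapWalk_eq (subset_nodes hH hye) hrest'
    exact ⟨((e, t), y) :: W,
      ⟨hH, (hiso.mem_image_iff (subset_nodes hH) hz).1 hze', lt_of_add_lt_add_right hts', hye,
        fun h => hne' (congrArg π h), hW⟩, rfl⟩

theorem walkProb_mapWalk (α : ℝ) :
    ∀ {z : V} {s : ℝ} {W : List ((Finset V × ℝ) × V)}, z ∈ nodes H1 → ValidWalk H1 z s W →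
      walkProb α H2 (π z) (s + Δ) (mapWalk π Δ W) = walkProb α H1 z s W
  | _, _, [], _, _ => rfl
  | z, s, (et, _) :: _, hz, ⟨hH, _, _, hz'e, _, hrest⟩ => by
    rw [mapWalk_cons, walkProb, walkProb, hiso.sum_weight_cand α hz, hiso.weight_mapEdge α s hH]
    simp only [mapEdge, hiso.card_image hH]
    rw [walkProb_mapWalk α (subset_nodes hH hz'e) hrest]

end IsIso

theorem walk_bijection_general [DecidableEq V] [DecidableEq V']
    (H1 : Finset (Finset V × ℝ)) (H2 : Finset (Finset V' × ℝ))
    (π : V → V') (Δ : ℝ)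
    (hiso : IsIso π Δ H1 H2)
    (α : ℝ) (m : ℕ) (z0 : V) (hz0 : z0 ∈ nodes H1) (t0 : ℝ) :
    Set.BijOn (mapWalk π Δ)
      {W : List ((Finset V × ℝ) × V) | W.length = m ∧ ValidWalk H1 z0 t0 W}
      {W' : List ((Finset V' × ℝ) × V') | W'.length = m ∧ ValidWalk H2 (π z0) (t0 + Δ) W'} ∧
    ∀ W : List ((Finset V × ℝ) × V), W.length = m → ValidWalk H1 z0 t0 W →
      walkProb α H2 (π z0) (t0 + Δ) (mapWalk π Δ W) = walkProb α H1 z0 t0 W := by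
  refine ⟨⟨?mapsTo, ?injOn, ?surjOn⟩, fun W _ hW => hiso.walkProb_mapWalk α hz0 hW⟩
  case mapsTo =>
    rintro W ⟨hlen, hW⟩
    exact ⟨(length_mapWalk W).trans hlen, hiso.validWalk_mapWalk hz0 hW⟩
  case injOn =>
    rintro W₁ ⟨-, hW₁⟩ W₂ ⟨-, hW₂⟩ h
    exact List.injOn_map (hiso.injOn_mapEdge.prodMap hiso.injOn) hW₁.forall_mem hW₂.forall_mem h
  case surjOn =>
    rintro W' ⟨hlen, hW'⟩
    obtain ⟨W, hW, rfl⟩ := hiso.exists_validWalk_mapWalk_eq hz0 hW'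
    exact ⟨W, ⟨(length_mapWalk W).symm.trans hlen, hW⟩, rfl⟩

theorem walk_bijection [DecidableEq V] [DecidableEq V']
    (H1 : Finset (Finset V × ℝ)) (H2 : Finset (Finset V' × ℝ))
    (hcard1 : ∀ et ∈ H1, 2 ≤ et.1.card) (hcard2 : ∀ et ∈ H2, 2 ≤ et.1.card)
    (u v w : V) (u' v' w' : V') (t t' : ℝ) (π : V → V') (Δ : ℝ) (hΔ : Δ = t' - t)
    (hiso : IsIso π Δ H1 H2)
    (hUV : ({π u, π v} : Finset V') = {u', v'}) (hW : π w = w')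
    (α : ℝ) (hα : 0 ≤ α) (m : ℕ) (z0 : V) (hz0 : z0 ∈ nodes H1) (t0 : ℝ) :
    Set.BijOn (mapWalk π Δ)
      {W : List ((Finset V × ℝ) × V) | W.length = m ∧ ValidWalk H1 z0 t0 W}
      {W' : List ((Finset V' × ℝ) × V') | W'.length = m ∧ ValidWalk H2 (π z0) (t0 + Δ) W'} ∧
    ∀ W : List ((Finset V × ℝ) × V), W.length = m → ValidWalk H1 z0 t0 W →
      walkProb α H2 (π z0) (t0 + Δ) (mapWalk π Δ W) = walkProb α H1 z0 t0 W :=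
  walk_bijection_general H1 H2 π Δ hiso α m z0 hz0 t0

end HIT
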